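/- arXiv:1908.01701 — 4 statements merged into one kernel-verified Lean document; each statement's English description precedes it below -/
import Mathlib

section
/- Let Λ be a self-dual hermitian O_F-lattice of rank n (over an unramified quadratic extension F/F_0), let W ⊂ Λ ⊗ F be an F-subspace of dimension n−1, and set M^♭ = W ∩ Λ. Then the type of M^♭ is at most 1, i.e., the quotient (M^♭)^∨/M^♭ is a cyclic O_F-module, where the dual is taken inside W. -/
/-!
Write `M = W ∩ Λ`. Pick `u ≠ 0` orthogonal to `W`; nondegeneracy of `W` gives `u ∉ W`. Since `O_F`
is a DVR, the image of `Λ` under a functional with kernel `W` is cyclic, so `Λ = M + O_F x₀`, and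
`B(u, x₀) ≠ 0` because a self-dual lattice contains no line. Let `w₀ ∈ W` be the component of
`x₀` along `F u`. For `x ∈ M^∨`, subtracting the multiple of `u` that kills the pairing with `x₀`
lands in `Λ^∨ = Λ = M + O_F x₀`; projecting back to `W` gives `x ∈ M + O_F w₀`. So
`M^∨ = M + O_F w₀` and `M^∨/M` is cyclic.
-/

noncomputable section

open Polynomial

variable {F : Type*} [Field F] {O : Type*} [CommRing O] [Algebra O F]
variable {V : Type*} [AddCommGroup V] [Module F V] [Module O V] [IsScalarTower O F V]

/-- A hermitian form on `V` relative to the involution `σ` of `F`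
(linear in the first variable, `σ`-conjugate-symmetric). -/
structure IsHermitianForm (σ : F ≃+* F) (B : V → V → F) : Prop where
  add_left : ∀ x y z : V, B (x + y) z = B x z + B y z
  smul_left : ∀ (c : F) (x y : V), B (c • x) y = c * B x y
  conj_symm : ∀ x y : V, B x y = σ (B y x)

theorem IsHermitianForm.zero_left {σ : F ≃+* F} {B : V → V → F}
    (hB : IsHermitianForm σ B) (y : V) : B 0 y = 0 := by
  have h := hB.add_left 0 0 y
  rw [add_zero] at h
  exact (left_eq_add.mp h)

/-- An `O`-lattice is integral if the hermitian form takes values in (the image of) `O` on it. -/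
def IsIntegralLat (B : V → V → F) (L : Submodule O V) : Prop :=
  ∀ x ∈ L, ∀ y ∈ L, B x y ∈ (algebraMap O F).range

/-- The dual lattice of `L` taken inside the `F`-subspace `W`:
all `x ∈ W` pairing integrally with `L`. -/
def dualLat (σ : F ≃+* F) (B : V → V → F) (hB : IsHermitianForm σ B)
    (W : Submodule F V) (L : Submodule O V) : Submodule O V where
  carrier := {x | x ∈ W ∧ ∀ y ∈ L, B x y ∈ (algebraMap O F).range}
  add_mem' := by
    rintro a b ⟨haW, ha⟩ ⟨hbW, hb⟩
    refine ⟨W.add_mem haW hbW, fun y hy => ?_⟩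
    rw [hB.add_left]
    exact Subring.add_mem _ (ha y hy) (hb y hy)
  zero_mem' := by
    refine ⟨W.zero_mem, fun y hy => ?_⟩
    rw [hB.zero_left]
    exact Subring.zero_mem _
  smul_mem' := by
    rintro c x ⟨hxW, hx⟩
    have hsm : (c : O) • x = (algebraMap O F c) • x := (algebraMap_smul F c x).symm
    refine ⟨?_, fun y hy => ?_⟩
    · show c • x ∈ W
      rw [hsm]; exact W.smul_mem _ hxW
    · show B (c • x) y ∈ _
      rw [hsm, hB.smul_left]
      exact Subring.mul_mem _ ⟨c, rfl⟩ (hx y hy)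

/-- `L` is an `O`-lattice generating the `F`-subspace `U`. -/
def IsLatIn (U : Submodule F V) (L : Submodule O V) : Prop :=
  L.FG ∧ Submodule.span F (L : Set V) = U

/-- Minimal number of generators of a submodule. -/
def minGen (O : Type*) [Semiring O] {M : Type*} [AddCommMonoid M] [Module O M]
    (N : Submodule O M) : ℕ :=
  sInf {n | ∃ s : Finset M, s.card = n ∧ Submodule.span O (s : Set M) = N}

/-- The type `t(L)` of a lattice `L` (relative to the subspace `W`): the minimal number of
generators of `L^∨/L`. -/
def latType (σ : F ≃+* F) (B : V → V → F) (hB : IsHermitianForm σ B)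
    (W : Submodule F V) (L : Submodule O V) : ℕ :=
  minGen O (Submodule.map L.mkQ (dualLat σ B hB W L))

/-- Length of a module: the longest strict chain of submodules. -/
def modLength (O : Type*) [Semiring O] (M : Type*) [AddCommMonoid M] [Module O M] : ℕ :=
  sSup {n | ∃ c : Fin (n + 1) → Submodule O M, StrictMono c}

/-- `ℓ(L'/L)`, the `O`-length of the quotient `L'/L`. -/
def quotLength (L L' : Submodule O V) : ℕ :=
  modLength O (Submodule.map L.mkQ L')

/-- `c = ϖ^v · unit`, i.e. `c` has valuation `v ∈ ℕ`. -/
def HasValNat (ϖ : O) (c : F) (v : ℕ) : Prop :=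
  ∃ u : Oˣ, c = algebraMap O F (ϖ ^ v * (u : O))

/-- `c = ϖ^v · unit` with `v ∈ ℤ`. -/
def HasValInt (ϖ : O) (c : F) (v : ℤ) : Prop :=
  ∃ u : Oˣ, c = (algebraMap O F ϖ) ^ v * algebraMap O F (u : O)

/-- The Cho–Yamauchi weight factor `m(t; X) = ∏_{i=0}^{t-1} (1 - (-q)^i X)`. -/
def cyWeight (q : ℕ) (t : ℕ) : Polynomial ℤ :=
  ∏ i ∈ Finset.range t, (1 - Polynomial.C ((-(q : ℤ)) ^ i) * Polynomial.X)

/-- The derived weight factor `m(a) = ∏_{i=1}^{a-1}(1-(-q)^i)` for `a ≥ 1`, and `m(0) = 0`. -/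
def mInt (q : ℕ) (a : ℕ) : ℤ :=
  if a = 0 then 0 else ∏ i ∈ Finset.Icc 1 (a - 1), (1 - (-(q : ℤ)) ^ i)

/-- The index set of the Cho–Yamauchi formula: integral lattices `L'` with
`L ⊆ L' ⊆ L ⊗ F`. -/
def cyLatSet (B : V → V → F) (L : Submodule O V) : Set (Submodule O V) :=
  {L' | L ≤ L' ∧ (L' : Set V) ⊆ (Submodule.span F (L : Set V) : Set V) ∧ IsIntegralLat B L'}

/-- The normalized local Siegel series `Den(X, L)`, defined via the Cho–Yamauchi formula
`Den(X,L) = ∑_{L ⊆ L' ⊆ L'^∨} X^{2 ℓ(L'/L)} · m(t(L'); X)`. -/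
def denPoly (q : ℕ) (σ : F ≃+* F) (B : V → V → F) (hB : IsHermitianForm σ B)
    (L : Submodule O V) (hfin : (cyLatSet B L).Finite) : Polynomial ℤ :=
  ∑ L' ∈ hfin.toFinset,
    Polynomial.X ^ (2 * quotLength L L') *
      cyWeight q (latType σ B hB (Submodule.span F (L : Set V)) L')


open Module

namespace IsHermitianForm

variable {σ : F ≃+* F} {B : V → V → F}

theorem add_right (hB : IsHermitianForm σ B) (x y z : V) : B x (y + z) = B x y + B x z := by
  rw [hB.conj_symm, hB.add_left, map_add, ← hB.conj_symm, ← hB.conj_symm]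

theorem smul_right (hB : IsHermitianForm σ B) (c : F) (x y : V) :
    B x (c • y) = σ c * B x y := by
  rw [hB.conj_symm, hB.smul_left, map_mul, ← hB.conj_symm]

theorem sub_left (hB : IsHermitianForm σ B) (x y z : V) : B (x - y) z = B x z - B y z := by
  rw [eq_sub_iff_add_eq, ← hB.add_left, sub_add_cancel]

def toSesq (hB : IsHermitianForm σ B) : V →ₗ[F] V →ₛₗ[(σ : F →+* F)] F :=
  LinearMap.mk₂'ₛₗ (RingHom.id F) (σ : F →+* F) B
    hB.add_left hB.smul_left hB.add_right hB.smul_right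

theorem exists_ne_zero_forall_eq_zero [FiniteDimensional F V] (hB : IsHermitianForm σ B)
    {U : Submodule F V} (hU : finrank F U < finrank F V) : ∃ u ≠ 0, ∀ y ∈ U, B u y = 0 := by
  let b := finBasis F U
  let T : V →ₗ[F] Fin (finrank F U) → F := LinearMap.pi fun i => hB.toSesq.flip (b i)
  obtain ⟨u, hu, hu0⟩ := Submodule.exists_mem_ne_zero_of_ne_bot
    (LinearMap.ker_ne_bot_of_finrank_lt (f := T) (by simpa using hU))
  have hrestrict : (hB.toSesq u).comp U.subtype = 0 :=
    b.ext fun i => congrFun (LinearMap.mem_ker.mp hu) i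
  exact ⟨u, hu0, fun y hy => LinearMap.congr_fun hrestrict ⟨y, hy⟩⟩

end IsHermitianForm

theorem Submodule.exists_ker_eq_of_finrank_add_one [FiniteDimensional F V] {W : Submodule F V}
    (hW : finrank F W + 1 = finrank F V) : ∃ f : V →ₗ[F] F, LinearMap.ker f = W := by
  have hquot : finrank F (V ⧸ W) = finrank F F := by
    have := W.finrank_quotient_add_finrank
    rw [finrank_self]
    omega
  exact ⟨(LinearEquiv.ofFinrankEq _ _ hquot).toLinearMap ∘ₗ W.mkQ,
    by rw [LinearEquiv.ker_comp, Submodule.ker_mkQ]⟩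

theorem minGen_span_singleton_le_one {M : Type*} [AddCommMonoid M] [Module O M] (v : M) :
    minGen O (O ∙ v) ≤ 1 :=
  Nat.sInf_le ⟨{v}, Finset.card_singleton v, by rw [Finset.coe_singleton]⟩

theorem exists_eq_add_smul_of_mem_sup_span {L : Submodule O V} {x₀ x : V}
    (hx : x ∈ L ⊔ O ∙ x₀) : ∃ m ∈ L, ∃ a : O, x = m + a • x₀ := by
  obtain ⟨m, hm, _, hz, rfl⟩ := Submodule.mem_sup.mp hx
  obtain ⟨a, rfl⟩ := Submodule.mem_span_singleton.mp hz
  exact ⟨m, hm, a, rfl⟩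

section Dual

variable {σ : F ≃+* F} {B : V → V → F} (hB : IsHermitianForm σ B)

theorem isIntegralLat_of_dualLat_top_eq {Λ : Submodule O V} (hself : dualLat σ B hB ⊤ Λ = Λ) :
    IsIntegralLat B Λ :=
  fun x hx => (hself.symm ▸ hx : x ∈ dualLat σ B hB ⊤ Λ).2

theorem le_dualLat_of_isIntegralLat {W : Submodule F V} {L : Submodule O V}
    (hL : IsIntegralLat B L) (hLW : L ≤ W.restrictScalars O) : L ≤ dualLat σ B hB W L :=
  fun x hx => ⟨hLW hx, hL x hx⟩

theorem latType_le_one_of_dualLat_eq_sup_span {W : Submodule F V} {L : Submodule O V} {w : V}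
    (h : dualLat σ B hB W L = L ⊔ O ∙ w) : latType σ B hB W L ≤ 1 := by
  have hmap : (dualLat σ B hB W L).map L.mkQ = O ∙ L.mkQ w := by
    rw [h, Submodule.map_sup, Submodule.mkQ_map_self, bot_sup_eq, Submodule.map_span,
      Set.image_singleton]
  rw [latType, hmap]
  exact minGen_span_singleton_le_one _

theorem dualLat_inf_eq_sup_span {Λ : Submodule O V} (hself : dualLat σ B hB ⊤ Λ = Λ)
    {W : Submodule F V} {u x₀ w₀ : V} {t : F} (hu : ∀ w ∈ W, B u w = 0) (huW : u ∉ W)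
    (hΛ : W.restrictScalars O ⊓ Λ ⊔ O ∙ x₀ = Λ) (hux₀ : B u x₀ ≠ 0) (hw₀ : w₀ ∈ W)
    (hx₀ : x₀ = w₀ + t • u) :
    dualLat σ B hB W (W.restrictScalars O ⊓ Λ) = W.restrictScalars O ⊓ Λ ⊔ O ∙ w₀ := by
  have hint := isIntegralLat_of_dualLat_top_eq hB hself
  have hx₀Λ : x₀ ∈ Λ := hΛ ▸ Submodule.mem_sup_right (Submodule.mem_span_singleton_self x₀)
  apply le_antisymm
  · rintro x ⟨hxW, hxM⟩
    set c := B x x₀ / B u x₀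
    have hy : x - c • u ∈ Λ := by
      rw [← hself]
      refine ⟨Submodule.mem_top, fun y hy => ?_⟩
      rw [← hΛ] at hy
      obtain ⟨m, hm, a, rfl⟩ := exists_eq_add_smul_of_mem_sup_span hy
      have hpair : B (x - c • u) x₀ = 0 := by
        rw [hB.sub_left, hB.smul_left, div_mul_cancel₀ _ hux₀, sub_self]
      have hm' : B (x - c • u) m = B x m := by
        rw [hB.sub_left, hB.smul_left, hu m hm.1, mul_zero, sub_zero]
      rw [hB.add_right, ← algebraMap_smul F a x₀, hB.smul_right, hpair, mul_zero, add_zero, hm']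
      exact hxM m hm
    rw [← hΛ] at hy
    obtain ⟨m, hm, a, hxm⟩ := exists_eq_add_smul_of_mem_sup_span hy
    have hdiff : x - m - a • w₀ = (c + algebraMap O F a * t) • u := by
      rw [← algebraMap_smul F a w₀, sub_eq_iff_eq_add.mp hxm, hx₀, ← algebraMap_smul F a]
      module
    have hcoef : c + algebraMap O F a * t = 0 := by
      by_contra hne
      refine huW ((W.smul_mem_iff hne).mp (hdiff ▸ ?_))
      exact W.sub_mem (W.sub_mem hxW hm.1) (W.smul_of_tower_mem a hw₀)
    rw [hcoef, zero_smul, sub_eq_zero, sub_eq_iff_eq_add'] at hdiff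
    exact hdiff ▸ Submodule.add_mem_sup hm
      (Submodule.smul_mem _ a (Submodule.mem_span_singleton_self w₀))
  · refine sup_le
      (le_dualLat_of_isIntegralLat hB (fun x hx y hy => hint x hx.2 y hy.2) inf_le_left)
      ((Submodule.span_singleton_le_iff_mem _ _).mpr ⟨hw₀, fun m hm => ?_⟩)
    have h := hB.add_left w₀ (t • u) m
    rw [← hx₀, hB.smul_left, hu m hm.1, mul_zero, add_zero] at h
    exact h ▸ hint x₀ hx₀Λ m hm.2

end Dual

variable [IsDomain O] [IsDiscreteValuationRing O] [IsFractionRing O F]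

theorem IsDiscreteValuationRing.not_finite_of_isFractionRing : ¬ Module.Finite O F := fun _ =>
  IsDiscreteValuationRing.not_isField O <| IsFractionRing.surjective_iff_isField.mp fun x =>
    IsIntegrallyClosed.isIntegral_iff.mp (IsIntegral.of_finite O (x : F))

theorem Submodule.FG.isPrincipal_of_isFractionRing {N : Submodule O F} (hN : N.FG) :
    N.IsPrincipal :=
  FractionalIdeal.isPrincipal ⟨N, FractionalIdeal.isFractional_of_fg hN⟩

theorem eq_zero_of_forall_smul_mem {Λ : Submodule O V} (hΛ : Λ.FG) {u : V}
    (hu : ∀ c : F, c • u ∈ Λ) : u = 0 := by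
  by_contra hu0
  obtain ⟨g, hg⟩ : ∃ g : Module.Dual F V, g u ≠ 0 := by
    by_contra! h
    exact hu0 ((Module.forall_dual_apply_eq_zero_iff F u).mp h)
  have := Module.Finite.iff_fg.mpr hΛ
  refine IsDiscreteValuationRing.not_finite_of_isFractionRing (O := O) (F := F)
    (Module.Finite.of_surjective ((g.restrictScalars O).comp Λ.subtype) fun c => ?_)
  exact ⟨⟨(c / g u) • u, hu _⟩, by simp [div_mul_cancel₀ _ hg]⟩

theorem exists_ker_inf_sup_span_eq (f : V →ₗ[F] F) {Λ : Submodule O V} (hΛ : Λ.FG) :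
    ∃ x₀, (LinearMap.ker f).restrictScalars O ⊓ Λ ⊔ O ∙ x₀ = Λ := by
  obtain ⟨a, ha⟩ := (hΛ.map (f.restrictScalars O)).isPrincipal_of_isFractionRing.principal
  obtain ⟨x₀, hx₀, hfx₀⟩ : a ∈ Λ.map (f.restrictScalars O) :=
    ha ▸ Submodule.mem_span_singleton_self a
  refine ⟨x₀, le_antisymm
    (sup_le inf_le_right ((Submodule.span_singleton_le_iff_mem _ _).mpr hx₀)) fun x hx => ?_⟩
  obtain ⟨c, hc⟩ := Submodule.mem_span_singleton.mp
    (ha ▸ Submodule.mem_map_of_mem hx : f.restrictScalars O x ∈ O ∙ a)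
  have hker : x - c • x₀ ∈ (LinearMap.ker f).restrictScalars O ⊓ Λ := by
    refine ⟨?_, Λ.sub_mem hx (Λ.smul_mem c hx₀)⟩
    change f (x - c • x₀) = 0
    rw [map_sub, LinearMap.map_smul_of_tower]
    exact sub_eq_zero.mpr (hc.symm.trans (congrArg (c • ·) hfx₀.symm))
  simpa using Submodule.add_mem_sup hker
    (Submodule.smul_mem _ c (Submodule.mem_span_singleton_self x₀))

namespace IsHermitianForm

variable {σ : F ≃+* F} {B : V → V → F} (hB : IsHermitianForm σ B)

theorem eq_zero_of_forall_mem_eq_zero {Λ : Submodule O V} (hΛ : Λ.FG)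
    (hself : dualLat σ B hB ⊤ Λ = Λ) {u : V} (hu : ∀ x ∈ Λ, B u x = 0) : u = 0 :=
  eq_zero_of_forall_smul_mem hΛ fun c => by
    rw [← hself]
    refine ⟨Submodule.mem_top, fun y hy => ?_⟩
    rw [hB.smul_left, hu y hy, mul_zero]
    exact zero_mem _

theorem apply_ne_zero_of_inf_sup_span_eq {Λ : Submodule O V} (hΛ : Λ.FG)
    (hself : dualLat σ B hB ⊤ Λ = Λ) {W : Submodule F V} {u x₀ : V} (hu0 : u ≠ 0)
    (hu : ∀ w ∈ W, B u w = 0) (hΛx₀ : W.restrictScalars O ⊓ Λ ⊔ O ∙ x₀ = Λ) : B u x₀ ≠ 0 := by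
  intro h
  refine hu0 (hB.eq_zero_of_forall_mem_eq_zero hΛ hself fun y hy => ?_)
  rw [← hΛx₀] at hy
  obtain ⟨m, hm, a, rfl⟩ := exists_eq_add_smul_of_mem_sup_span hy
  rw [hB.add_right, ← algebraMap_smul F a x₀, hB.smul_right, h, mul_zero, add_zero, hu m hm.1]

end IsHermitianForm

theorem type_le_one_of_selfdual_cap_hyperplane_general
    (σ : F ≃+* F)
    (B : V → V → F) (hB : IsHermitianForm σ B)
    [FiniteDimensional F V] (n : ℕ) (hn : 1 ≤ n) (hdim : Module.finrank F V = n)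
    (Λ : Submodule O V) (hΛ : IsLatIn (⊤ : Submodule F V) Λ)
    (hselfdual : dualLat σ B hB ⊤ Λ = Λ)
    (W : Submodule F V) (hWdim : Module.finrank F W = n - 1)
    (hWnd : ∀ x ∈ W, (∀ y ∈ W, B x y = 0) → x = 0) :
    latType σ B hB W (Submodule.restrictScalars O W ⊓ Λ) ≤ 1 := by
  have hcodim : finrank F W + 1 = finrank F V := by omega
  obtain ⟨u, hu0, hu⟩ := hB.exists_ne_zero_forall_eq_zero (U := W) (by omega)
  have huW : u ∉ W := fun h => hu0 (hWnd u h hu)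
  obtain ⟨f, hf⟩ := W.exists_ker_eq_of_finrank_add_one hcodim
  have hfu : f u ≠ 0 := by rwa [ne_eq, ← LinearMap.mem_ker, hf]
  obtain ⟨x₀, hΛx₀⟩ := exists_ker_inf_sup_span_eq f hΛ.1
  rw [hf] at hΛx₀
  have hw₀ : x₀ - (f x₀ / f u) • u ∈ W := by
    rw [← hf, LinearMap.mem_ker, map_sub, map_smul, smul_eq_mul, div_mul_cancel₀ _ hfu, sub_self]
  exact latType_le_one_of_dualLat_eq_sup_span hB <|
    dualLat_inf_eq_sup_span hB hselfdual hu huW hΛx₀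
      (hB.apply_ne_zero_of_inf_sup_span_eq hΛ.1 hselfdual hu0 hu hΛx₀) hw₀
      (sub_add_cancel _ _).symm

/-- if `Λ` is a self-dual hermitian `O_F`-lattice of rank `n`, `W ⊂ Λ ⊗ F`
an `F`-subspace of dimension `n − 1`, and `M^♭ = W ∩ Λ`, then `t(M^♭) ≤ 1`, i.e. the
quotient `(M^♭)^∨/M^♭` (dual taken inside `W`) is a cyclic `O_F`-module. -/
theorem type_le_one_of_selfdual_cap_hyperplane
    (σ : F ≃+* F) (hσ2 : ∀ c : F, σ (σ c) = c)
    (hσO : ∀ c : O, σ (algebraMap O F c) ∈ (algebraMap O F).range)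
    (B : V → V → F) (hB : IsHermitianForm σ B)
    (q : ℕ) (hq1 : 1 < q) (hqodd : Odd q) (ϖ : O) (hϖ : Irreducible ϖ)
    (hres : Nat.card (O ⧸ Ideal.span {ϖ}) = q ^ 2)
    (hσϖ : σ (algebraMap O F ϖ) = algebraMap O F ϖ)
    [FiniteDimensional F V] (n : ℕ) (hn : 1 ≤ n) (hdim : Module.finrank F V = n)
    (Λ : Submodule O V) (hΛ : IsLatIn (⊤ : Submodule F V) Λ)
    (hselfdual : dualLat σ B hB ⊤ Λ = Λ)
    (W : Submodule F V) (hWdim : Module.finrank F W = n - 1)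
    (hWnd : ∀ x ∈ W, (∀ y ∈ W, B x y = 0) → x = 0) :
    latType σ B hB W (Submodule.restrictScalars O W ⊓ Λ) ≤ 1 :=
  type_le_one_of_selfdual_cap_hyperplane_general σ B hB n hn hdim Λ hΛ hselfdual W hWdim hWnd
end
end

section
/- Let V be a nondegenerate hermitian space of dimension n over F, let L'^♭ ⊂ W be an O_F-lattice of full rank n−1 in a nondegenerate hyperplane W = L^♭_F of V. Then the map u ↦ L'^♭ + ⟨u⟩ induces a bijection from the quotient set [(V/L'^♭) ∖ (W/L'^♭)]/O_F^× onto the set of rank-n O_F-lattices L' ⊂ V with L' ∩ W = L'^♭. -/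
/-!
Write the hyperplane `W` as the kernel of a linear form `φ : V → F`. For `u ∉ W` no nonzero
multiple `a • u` lies in `W`, which gives `(L'^♭ + ⟨u⟩) ∩ W = L'^♭` and shows that
`L'^♭ + ⟨u⟩ = L'^♭ + ⟨u'⟩` forces `u' = b + a u`, `u = b' + a' u'` with `a a' = 1`.
Conversely, for a lattice `L'` the image `φ(L')` is a finitely generated `O_F`-submodule of `F`,
i.e. a fractional ideal of the principal ideal domain `O_F`, so it is generated by `φ(u)` for
some `u ∈ L'`, and then `L' = (L' ∩ W) + ⟨u⟩`.
-/

noncomputable section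

open Polynomial

variable {F : Type*} [Field F] {O : Type*} [CommRing O] [Algebra O F]
variable {V : Type*} [AddCommGroup V] [Module F V] [Module O V] [IsScalarTower O F V]

variable [IsDomain O] [IsDiscreteValuationRing O] [IsFractionRing O F]

open Module Submodule

section SupSpanSingleton

variable {R M : Type*} [CommRing R] [AddCommGroup M] [Module R M]

theorem Submodule.sup_span_singleton_inf_eq {N P : Submodule R M} {u : M} (hNP : N ≤ P)
    (hu : ∀ a : R, a • u ∈ P → a = 0) : (N ⊔ span R {u}) ⊓ P = N := by
  refine le_antisymm ?_ (le_inf le_sup_left hNP)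
  rintro x ⟨hxN, hxP⟩
  obtain ⟨b, hb, y, hy, rfl⟩ := mem_sup.mp hxN
  obtain ⟨a, rfl⟩ := mem_span_singleton.mp hy
  have ha : a = 0 := hu a (by simpa using P.sub_mem hxP (hNP hb))
  simpa [ha] using hb

theorem Submodule.sup_span_singleton_eq_sup_span_singleton_iff {N : Submodule R M} {u u' : M}
    (hu' : ∀ a : R, a • u' ∈ N → a = 0) :
    N ⊔ span R {u} = N ⊔ span R {u'} ↔ ∃ c : Rˣ, u' - (c : R) • u ∈ N := by
  constructor
  · intro h
    obtain ⟨b, hb, y, hy, hu'_eq⟩ :=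
      mem_sup.mp (h ▸ mem_sup_right (mem_span_singleton_self u'))
    obtain ⟨a, rfl⟩ := mem_span_singleton.mp hy
    obtain ⟨b', hb', y', hy', hu_eq⟩ :=
      mem_sup.mp (h ▸ mem_sup_right (mem_span_singleton_self u))
    obtain ⟨a', rfl⟩ := mem_span_singleton.mp hy'
    have hcomb : (1 - a * a') • u' = b + a • b' :=
      calc (1 - a * a') • u' = (b + a • (b' + a' • u')) - a • a' • u' := by
            rw [hu_eq, hu'_eq, sub_smul, one_smul, mul_smul]
        _ = b + a • b' := by rw [smul_add]; abel
    have haa' : a * a' = 1 :=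
      (sub_eq_zero.mp (hu' _ (hcomb ▸ N.add_mem hb (N.smul_mem a hb')))).symm
    refine ⟨(IsUnit.of_mul_eq_one a' haa').unit, ?_⟩
    simpa [← hu'_eq] using hb
  · rintro ⟨c, hc⟩
    have hu'_mem : u' ∈ N ⊔ span R {u} := by
      rw [← sub_add_cancel u' ((c : R) • u)]
      exact add_mem (mem_sup_left hc) (mem_sup_right (smul_mem _ _ (mem_span_singleton_self u)))
    have hu_mem : u ∈ N ⊔ span R {u'} := by
      have : u = (c⁻¹ : Rˣ) • u' - (c⁻¹ : Rˣ) • (u' - (c : R) • u) := by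
        rw [← smul_sub, sub_sub_cancel, Units.smul_def, smul_smul, Units.inv_mul, one_smul]
      rw [this]
      exact sub_mem (mem_sup_right (smul_mem _ _ (mem_span_singleton_self u')))
        (mem_sup_left (N.smul_mem _ hc))
    exact le_antisymm (sup_le le_sup_left ((span_singleton_le_iff_mem _ _).mpr hu_mem))
      (sup_le le_sup_left ((span_singleton_le_iff_mem _ _).mpr hu'_mem))

theorem Submodule.eq_inf_ker_sup_span_singleton {N : Type*} [AddCommGroup N] [Module R N]
    (f : M →ₗ[R] N) {L : Submodule R M} {u : M} (hu : u ∈ L) (hL : L.map f = span R {f u}) :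
    L = (L ⊓ LinearMap.ker f) ⊔ span R {u} := by
  refine le_antisymm (fun x hx => ?_) (sup_le inf_le_left ((span_singleton_le_iff_mem _ _).mpr hu))
  obtain ⟨a, ha⟩ := mem_span_singleton.mp (hL ▸ mem_map_of_mem hx)
  have hker : x - a • u ∈ L ⊓ LinearMap.ker f :=
    ⟨L.sub_mem hx (L.smul_mem a hu), by simp [ha]⟩
  rw [← sub_add_cancel x (a • u)]
  exact add_mem (mem_sup_left hker) (mem_sup_right (smul_mem _ a (mem_span_singleton_self u)))

end SupSpanSingleton

section Hyperplane

variable {R K E : Type*} [CommRing R] [Field K] [AddCommGroup E] [Module K E] [Module R E]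

theorem Submodule.eq_zero_of_smul_mem_of_notMem [Algebra R K] [IsScalarTower R K E]
    [FaithfulSMul R K] {W : Submodule K E} {u : E} (hu : u ∉ W) {a : R} (h : a • u ∈ W) :
    a = 0 := by
  by_contra ha
  rw [← algebraMap_smul K a u] at h
  exact hu ((W.smul_mem_iff ((FaithfulSMul.algebraMap_eq_zero_iff R K).not.mpr ha)).mp h)

theorem Submodule.exists_ne_zero_ker_eq_of_finrank_quotient_eq_one {W : Submodule K E}
    (hW : finrank K (E ⧸ W) = 1) :
    ∃ φ : E →ₗ[K] K, φ ≠ 0 ∧ LinearMap.ker φ = W := by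
  have : Module.Finite K (E ⧸ W) := Module.finite_of_finrank_pos (by omega)
  let e : (E ⧸ W) ≃ₗ[K] K := LinearEquiv.ofFinrankEq _ K (by simpa using hW)
  refine ⟨e.toLinearMap ∘ₗ W.mkQ, fun h => ?_, by rw [LinearEquiv.ker_comp, ker_mkQ]⟩
  have hWtop : W = ⊤ := by rw [← ker_mkQ W, ← LinearEquiv.ker_comp e, h, LinearMap.ker_zero]
  subst hWtop
  simp [finrank_zero_of_subsingleton] at hW

theorem LinearMap.span_sup_span_singleton_eq_top {φ : E →ₗ[K] K} {N : Submodule R E}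
    (hN : span K (N : Set E) = LinearMap.ker φ) {u : E} (hu : u ∉ LinearMap.ker φ) :
    span K ((N ⊔ span R {u} : Submodule R E) : Set E) = ⊤ := by
  rw [eq_top_iff, ← LinearMap.span_singleton_sup_ker_eq_top φ hu, ← hN]
  exact sup_le
    (span_mono (Set.singleton_subset_iff.mpr (mem_sup_right (mem_span_singleton_self u))))
    (span_mono (SetLike.coe_subset_coe.mpr le_sup_left))

theorem LinearMap.exists_eq_inf_ker_sup_span_singleton [Algebra R K] [IsScalarTower R K E]
    [IsDomain R] [IsPrincipalIdealRing R] [IsFractionRing R K] {φ : E →ₗ[K] K} (hφ : φ ≠ 0)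
    {L : Submodule R E} (hfg : L.FG) (hspan : span K (L : Set E) = ⊤) :
    ∃ u ∉ LinearMap.ker φ,
      L = (L ⊓ (LinearMap.ker φ).restrictScalars R) ⊔ span R {u} := by
  have hprinc : (L.map (φ.restrictScalars R)).IsPrincipal :=
    FractionalIdeal.isPrincipal ⟨_, FractionalIdeal.isFractional_of_fg (hfg.map _)⟩
  obtain ⟨c, hc⟩ := hprinc.principal
  obtain ⟨u, hu, rfl⟩ : c ∈ L.map (φ.restrictScalars R) := hc ▸ mem_span_singleton_self c
  refine ⟨u, fun hker => hφ ?_, eq_inf_ker_sup_span_singleton (φ.restrictScalars R) hu hc⟩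
  have hL : L ≤ (LinearMap.ker φ).restrictScalars R := by
    rw [← LinearMap.ker_restrictScalars, LinearMap.le_ker_iff_map, hc]
    exact span_singleton_eq_bot.mpr hker
  rw [← LinearMap.ker_eq_top, eq_top_iff, ← hspan]
  exact span_le.mpr hL

end Hyperplane

theorem lattice_extension_bijection_general
    (n : ℕ) (hn : 1 ≤ n) (hdim : Module.finrank F V = n)
    (W : Submodule F V) (hWdim : Module.finrank F W = n - 1)
    (Lb : Submodule O V) (hfg : Lb.FG)
    (hspan : Submodule.span F (Lb : Set V) = W) :
    (∀ u : V, u ∉ W →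
        (Lb ⊔ Submodule.span O {u}).FG ∧
        Submodule.span F ((Lb ⊔ Submodule.span O {u} : Submodule O V) : Set V) = ⊤ ∧
        (Lb ⊔ Submodule.span O {u}) ⊓ Submodule.restrictScalars O W = Lb) ∧
    (∀ L' : Submodule O V, L'.FG → Submodule.span F (L' : Set V) = ⊤ →
        L' ⊓ Submodule.restrictScalars O W = Lb →
        ∃ u : V, u ∉ W ∧ L' = Lb ⊔ Submodule.span O {u}) ∧
    (∀ u u' : V, u ∉ W → u' ∉ W →
        ((Lb ⊔ Submodule.span O {u} = Lb ⊔ Submodule.span O {u'}) ↔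
          ∃ c : Oˣ, u' - (c : O) • u ∈ Lb)) := by
  have : Module.Finite F V := Module.finite_of_finrank_pos (by omega)
  obtain ⟨φ, hφ, rfl⟩ := exists_ne_zero_ker_eq_of_finrank_quotient_eq_one
    (by have := W.finrank_quotient_add_finrank; omega : finrank F (V ⧸ W) = 1)
  have hLb : Lb ≤ (LinearMap.ker φ).restrictScalars O := hspan ▸ subset_span
  have hu_smul : ∀ {u : V}, u ∉ LinearMap.ker φ →
      ∀ a : O, a • u ∈ (LinearMap.ker φ).restrictScalars O → a = 0 :=
    fun hu _ h => eq_zero_of_smul_mem_of_notMem (K := F) hu h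
  refine ⟨fun u hu => ⟨hfg.sup (fg_span_singleton u),
      LinearMap.span_sup_span_singleton_eq_top hspan hu,
      sup_span_singleton_inf_eq hLb (hu_smul hu)⟩,
    fun L' hfg' hspan' hL' => ?_,
    fun u u' _ hu' =>
      sup_span_singleton_eq_sup_span_singleton_iff fun a h => hu_smul hu' a (hLb h)⟩
  obtain ⟨u, hu, hL⟩ := LinearMap.exists_eq_inf_ker_sup_span_singleton hφ hfg' hspan'
  exact ⟨u, hu, hL' ▸ hL⟩

/-- for a rank `n−1` lattice `L'^♭` spanning a hyperplane `W` of the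
`n`-dimensional space `V`, the map `u ↦ L'^♭ + ⟨u⟩` induces a bijection from
`[(V/L'^♭) ∖ (W/L'^♭)]/O_F^×` onto the set of rank-`n` lattices `L'` with `L' ∩ W = L'^♭`:
it is well defined, surjective, and two vectors give the same lattice iff they agree up to
a unit and an element of `L'^♭`. -/
theorem lattice_extension_bijection
    [FiniteDimensional F V] (n : ℕ) (hn : 1 ≤ n) (hdim : Module.finrank F V = n)
    (W : Submodule F V) (hWdim : Module.finrank F W = n - 1)
    (Lb : Submodule O V) (hfg : Lb.FG)
    (hspan : Submodule.span F (Lb : Set V) = W) :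
    (∀ u : V, u ∉ W →
        (Lb ⊔ Submodule.span O {u}).FG ∧
        Submodule.span F ((Lb ⊔ Submodule.span O {u} : Submodule O V) : Set V) = ⊤ ∧
        (Lb ⊔ Submodule.span O {u}) ⊓ Submodule.restrictScalars O W = Lb) ∧
    (∀ L' : Submodule O V, L'.FG → Submodule.span F (L' : Set V) = ⊤ →
        L' ⊓ Submodule.restrictScalars O W = Lb →
        ∃ u : V, u ∉ W ∧ L' = Lb ⊔ Submodule.span O {u}) ∧
    (∀ u u' : V, u ∉ W → u' ∉ W →
        ((Lb ⊔ Submodule.span O {u} = Lb ⊔ Submodule.span O {u'}) ↔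
          ∃ c : Oˣ, u' - (c : O) • u ∈ Lb)) :=
  lattice_extension_bijection_general n hn hdim W hWdim Lb hfg hspan
end
end

section
/- In SL_2(F) for F a non-archimedean local field with ring of integers O_F and uniformizer ϖ, the subgroups N(ϖ^{−1}O_F) = {upper unitriangular matrices with entry in ϖ^{−1}O_F} and N_−(O_F) = {lower unitriangular matrices with entry in O_F} together generate the whole group SL_2(F). -/
/-!
With `d = diag(ϖ⁻¹, ϖ) = u(ϖ⁻¹) l(-ϖ) u(ϖ⁻¹) · u(-1) l(1) u(-1)`, a product of the generators,
`dⁿ u(b) d⁻ⁿ = u(ϖ⁻²ⁿ b)` and `d⁻ⁿ l(c) dⁿ = l(ϖ⁻²ⁿ c)`. Every element of `F` is `ϖ⁻ⁿ` times an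
integer, so all unipotents `u(b)` and `l(c)` are reached, and over any field these generate `SL₂`.
-/

open MatrixGroups

namespace Matrix.SpecialLinearGroup

section CommRing

variable {R : Type*} [CommRing R]

theorem transvection_zero_one_coe (b : R) :
    ((transvection zero_ne_one b : SL(2, R)) : Matrix (Fin 2) (Fin 2) R) = !![1, b; 0, 1] := by
  ext i j; fin_cases i <;> fin_cases j <;> simp [transvection_coe]

theorem transvection_one_zero_coe (c : R) :
    ((transvection one_ne_zero c : SL(2, R)) : Matrix (Fin 2) (Fin 2) R) = !![1, 0; c, 1] := by
  ext i j; fin_cases i <;> fin_cases j <;> simp [transvection_coe]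

end CommRing

variable {K : Type*} [Field K]

theorem diag2_mul_transvection_zero_one_mul_inv {a : K} (ha : a ≠ 0) (b : K) :
    diag2 a ha * transvection zero_ne_one b * (diag2 a ha)⁻¹ =
      transvection zero_ne_one (a ^ 2 * b) := by
  rw [diag2_inv]
  refine Subtype.ext ?_
  simp [transvection_zero_one_coe, diag2_coe', ha]
  ring

theorem inv_diag2_mul_transvection_one_zero_mul {a : K} (ha : a ≠ 0) (c : K) :
    (diag2 a ha)⁻¹ * transvection one_ne_zero c * diag2 a ha =
      transvection one_ne_zero (a ^ 2 * c) := by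
  rw [diag2_inv]
  refine Subtype.ext ?_
  simp [transvection_one_zero_coe, diag2_coe', ha]
  ring

variable (H : Subgroup SL(2, K))

theorem diag2_mem_of_transvection_mem {a : K} (ha : a ≠ 0)
    (hu : transvection zero_ne_one a ∈ H) (hl : transvection one_ne_zero (-a⁻¹) ∈ H)
    (hu₁ : transvection zero_ne_one (-1) ∈ H) (hl₁ : transvection one_ne_zero 1 ∈ H) :
    diag2 a ha ∈ H := by
  rw [diag2_decompose]
  exact mul_mem (mul_mem (mul_mem (mul_mem (mul_mem hu hl) hu) hu₁) hl₁) hu₁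

theorem transvection_zero_one_pow_mul_mem {a : K} (ha : a ≠ 0) (hd : diag2 a ha ∈ H) {b : K}
    (hb : transvection zero_ne_one b ∈ H) (n : ℕ) :
    transvection zero_ne_one (a ^ (2 * n) * b) ∈ H := by
  induction n with
  | zero => simpa using hb
  | succ n ih =>
    rw [show a ^ (2 * (n + 1)) * b = a ^ 2 * (a ^ (2 * n) * b) by ring,
      ← diag2_mul_transvection_zero_one_mul_inv ha]
    exact mul_mem (mul_mem hd ih) (inv_mem hd)

theorem transvection_one_zero_pow_mul_mem {a : K} (ha : a ≠ 0) (hd : diag2 a ha ∈ H) {c : K}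
    (hc : transvection one_ne_zero c ∈ H) (n : ℕ) :
    transvection one_ne_zero (a ^ (2 * n) * c) ∈ H := by
  induction n with
  | zero => simpa using hc
  | succ n ih =>
    rw [show a ^ (2 * (n + 1)) * c = a ^ 2 * (a ^ (2 * n) * c) by ring,
      ← inv_diag2_mul_transvection_one_zero_mul ha]
    exact mul_mem (mul_mem (inv_mem hd) ih) hd

end Matrix.SpecialLinearGroup

theorem Matrix.SL2.eq_top_of_forall_transvection_mem {K : Type*} [Field K] (H : Subgroup SL(2, K))
    (hupper : ∀ b, SpecialLinearGroup.transvection zero_ne_one b ∈ H)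
    (hlower : ∀ c, SpecialLinearGroup.transvection one_ne_zero c ∈ H) :
    H = ⊤ := by
  refine eq_top_iff.2 fun g _ ↦ transvection_induction (· ∈ H) (fun i j hij c ↦ ?_)
    (fun _ _ ↦ mul_mem) g
  fin_cases i <;> fin_cases j
  exacts [absurd rfl hij, hupper c, hlower c, absurd rfl hij]

namespace IsDiscreteValuationRing

variable {O F : Type*} [CommRing O] [IsDomain O] [IsDiscreteValuationRing O] [Field F]
  [Algebra O F] [IsFractionRing O F] {ϖ : O}

theorem exists_pow_mul_mem_range (hϖ : Irreducible ϖ) (x : F) :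
    ∃ n : ℕ, algebraMap O F ϖ ^ n * x ∈ (algebraMap O F).range := by
  obtain ⟨⟨y, hy⟩, r, hr⟩ := IsLocalization.exists_integer_multiple (nonZeroDivisors O) x
  obtain ⟨n, u, rfl⟩ := eq_unit_mul_pow_irreducible (nonZeroDivisors.ne_zero hy) hϖ
  refine ⟨n, ↑u⁻¹ * r, ?_⟩
  rw [map_mul, hr, Algebra.smul_def, ← mul_assoc, ← map_mul, ← mul_assoc, Units.inv_mul,
    one_mul, map_pow]

open Matrix.SpecialLinearGroup in
theorem SL2_eq_top_of_transvection_mem (hϖ : Irreducible ϖ) (H : Subgroup SL(2, F))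
    (hupper : ∀ b, algebraMap O F ϖ * b ∈ (algebraMap O F).range →
      transvection zero_ne_one b ∈ H)
    (hlower : ∀ c ∈ (algebraMap O F).range, transvection one_ne_zero c ∈ H) :
    H = ⊤ := by
  set π := algebraMap O F ϖ
  set 𝒪 := (algebraMap O F).range
  have hπ : π ≠ 0 := (map_ne_zero_iff _ (IsFractionRing.injective O F)).2 hϖ.ne_zero
  have hπ𝒪 : π ∈ 𝒪 := RingHom.mem_range_self _ ϖ
  have hd : diag2 π⁻¹ (inv_ne_zero hπ) ∈ H :=
    diag2_mem_of_transvection_mem H _ (hupper _ (by rw [mul_inv_cancel₀ hπ]; exact one_mem 𝒪))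
      (hlower _ (by rw [inv_inv]; exact neg_mem hπ𝒪)) (hupper _ (by simpa using hπ𝒪))
      (hlower _ (one_mem 𝒪))
  have hcancel (x : F) (n : ℕ) : π⁻¹ ^ (2 * n) * (π ^ (2 * n) * x) = x := by
    rw [inv_pow, inv_mul_cancel_left₀ (pow_ne_zero _ hπ)]
  refine Matrix.SL2.eq_top_of_forall_transvection_mem H (fun b ↦ ?_) (fun c ↦ ?_)
  · obtain ⟨n, hn⟩ := exists_pow_mul_mem_range hϖ b
    rw [← hcancel b n]
    refine transvection_zero_one_pow_mul_mem H _ hd (hupper _ ?_) n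
    convert mul_mem (pow_mem hπ𝒪 (n + 1)) hn using 1
    ring
  · obtain ⟨n, hn⟩ := exists_pow_mul_mem_range hϖ c
    rw [← hcancel c n]
    refine transvection_one_zero_pow_mul_mem H _ hd (hlower _ ?_) n
    convert mul_mem (pow_mem hπ𝒪 n) hn using 1
    ring

end IsDiscreteValuationRing

/-- in `SL₂(F)` over a non-archimedean local field `F` (fraction field of a
discrete valuation ring `O` with uniformizer `ϖ`), the subgroups `N(ϖ⁻¹O_F)` of upper
unitriangular matrices with entry in `ϖ⁻¹O_F` and `N₋(O_F)` of lower unitriangular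
matrices with entry in `O_F` together generate `SL₂(F)`. -/
theorem sl2_generated_by_unipotents
    {F : Type*} [Field F] {O : Type*} [CommRing O] [IsDomain O] [IsDiscreteValuationRing O]
    [Algebra O F] [IsFractionRing O F]
    (ϖ : O) (hϖ : Irreducible ϖ) :
    Subgroup.closure
      ({g : Matrix.SpecialLinearGroup (Fin 2) F | ∃ b : F,
          algebraMap O F ϖ * b ∈ (algebraMap O F).range ∧
          (g : Matrix (Fin 2) (Fin 2) F) = !![1, b; 0, 1]} ∪
        {g : Matrix.SpecialLinearGroup (Fin 2) F | ∃ c : F,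
          c ∈ (algebraMap O F).range ∧
          (g : Matrix (Fin 2) (Fin 2) F) = !![1, 0; c, 1]}) = ⊤ :=
  IsDiscreteValuationRing.SL2_eq_top_of_transvection_mem hϖ _
    (fun b hb ↦ Subgroup.subset_closure
      (Or.inl ⟨b, hb, Matrix.SpecialLinearGroup.transvection_zero_one_coe b⟩))
    (fun c hc ↦ Subgroup.subset_closure
      (Or.inr ⟨c, hc, Matrix.SpecialLinearGroup.transvection_one_zero_coe c⟩))
end

section
/- Let L^♭ be an integral hermitian O_F-lattice of rank n−1 with fundamental invariants (a_1,…,a_{n−1}), and let x ∈ V ∖ L^♭_F. Let (a'_1,…,a'_n) be the fundamental invariants of L^♭ + ⟨x⟩. Then a'_1 + ⋯ + a'_{n−1} ≥ a_1 + ⋯ + a_{n−1} holds if and only if x ∈ M(L^♭), where M(L^♭) = L^♭ ⊕ ⟨u⟩ with u ⊥ L^♭ the lattice of all vectors orthogonal to L^♭_F of valuation ≥ a_{n−1}. -/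
noncomputable section

open Polynomial

variable {F : Type*} [Field F] {O : Type*} [CommRing O] [Algebra O F]
variable {V : Type*} [AddCommGroup V] [Module F V] [Module O V] [IsScalarTower O F V]

variable [IsDomain O] [IsDiscreteValuationRing O] [IsFractionRing O F]

/-!
The sum `a'_1 + ⋯ + a'_{n-1}` is the minimal valuation of the `(n-1)`-minors of a Gram matrix
of `L = L^♭ + ⟨x⟩`, that is of the entries of its adjugate; this does not depend on the chosen
generating family of `L`, since a change of family multiplies the adjugate by integral matrices
on both sides. Compute it with the family `(e_1, …, e_{n-1}, x)`. Writing `x = ∑ c_j e_j + y`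
with `y ⊥ L^♭`, the Gram matrix is `T · diag(d_1, …, d_{n-1}, (y, y)) · T^*` for a unipotent
`T`, so its adjugate is `S^* · diag(D_k) · S` with `S = T⁻¹` and `D_k` the product of all
diagonal entries but the `k`-th. Since `val D_n = a_1 + ⋯ + a_{n-1}`, the entries `-D_n c_j` of
the last row force every `c_j` to be integral, after which the entry `D_{n-1} + N(c_{n-1}) D_n`
forces `val (y, y) ≥ a_{n-1}`; conversely these two conditions make every entry large enough.
They say exactly that `x ∈ L^♭ ⊕ ⟨u⟩`.
-/

section

omit [IsDomain O] [IsDiscreteValuationRing O] [IsFractionRing O F]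

def LeVal (ϖ : O) (v : ℤ) (c : F) : Prop :=
  ∃ b : O, c = algebraMap O F ϖ ^ v * algebraMap O F b

section Valuation

variable {ϖ : O} {v w : ℤ} {c d : F}

theorem leVal_zero (ϖ : O) (v : ℤ) : LeVal ϖ v (0 : F) := ⟨0, by simp⟩

theorem LeVal.add (hc : LeVal ϖ v c) (hd : LeVal ϖ v d) : LeVal ϖ v (c + d) := by
  obtain ⟨b, rfl⟩ := hc
  obtain ⟨b', rfl⟩ := hd
  exact ⟨b + b', by rw [map_add, mul_add]⟩

theorem LeVal.neg (hc : LeVal ϖ v c) : LeVal ϖ v (-c) := by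
  obtain ⟨b, rfl⟩ := hc
  exact ⟨-b, by rw [map_neg, mul_neg]⟩

theorem leVal_neg_iff : LeVal ϖ v (-c) ↔ LeVal ϖ v c :=
  ⟨fun h => neg_neg c ▸ h.neg, LeVal.neg⟩

theorem leVal_sum {ι : Type*} (s : Finset ι) {f : ι → F} (h : ∀ i ∈ s, LeVal ϖ v (f i)) :
    LeVal ϖ v (∑ i ∈ s, f i) :=
  Finset.sum_induction f (LeVal ϖ v) (fun _ _ => LeVal.add) (leVal_zero ϖ v) h

theorem leVal_zero_iff : LeVal ϖ 0 c ↔ c ∈ (algebraMap O F).range := by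
  simp [LeVal, RingHom.mem_range, eq_comm]

theorem LeVal.mul_mem (hc : LeVal ϖ v c) (hd : d ∈ (algebraMap O F).range) :
    LeVal ϖ v (c * d) := by
  obtain ⟨b, rfl⟩ := hc
  obtain ⟨b', rfl⟩ := hd
  exact ⟨b * b', by rw [map_mul, mul_assoc]⟩

theorem LeVal.mem_mul (hc : LeVal ϖ v c) (hd : d ∈ (algebraMap O F).range) :
    LeVal ϖ v (d * c) :=
  mul_comm c d ▸ hc.mul_mem hd

theorem LeVal.mul (hπ : algebraMap O F ϖ ≠ 0) (hc : LeVal ϖ v c) (hd : LeVal ϖ w d) :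
    LeVal ϖ (v + w) (c * d) := by
  obtain ⟨b, rfl⟩ := hc
  obtain ⟨b', rfl⟩ := hd
  exact ⟨b * b', by rw [map_mul, zpow_add₀ hπ]; ring⟩

theorem LeVal.mono (hπ : algebraMap O F ϖ ≠ 0) (hwv : w ≤ v) (hc : LeVal ϖ v c) :
    LeVal ϖ w c := by
  obtain ⟨k, rfl⟩ := Int.exists_add_of_le hwv
  obtain ⟨b, rfl⟩ := hc
  exact ⟨ϖ ^ k * b, by rw [zpow_add₀ hπ, zpow_natCast, map_mul, map_pow]; ring⟩

theorem HasValNat.hasValInt {a : ℕ} (h : HasValNat ϖ c a) : HasValInt ϖ c a := by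
  obtain ⟨u, rfl⟩ := h
  exact ⟨u, by rw [map_mul, map_pow, zpow_natCast]⟩

theorem HasValInt.leVal (h : HasValInt ϖ c v) : LeVal ϖ v c := by
  obtain ⟨u, rfl⟩ := h
  exact ⟨u, rfl⟩

theorem HasValInt.ne_zero (hπ : algebraMap O F ϖ ≠ 0) (h : HasValInt ϖ c v) : c ≠ 0 := by
  obtain ⟨u, rfl⟩ := h
  exact mul_ne_zero (zpow_ne_zero v hπ) (u.isUnit.map (algebraMap O F)).ne_zero

theorem HasValInt.mul (hπ : algebraMap O F ϖ ≠ 0) (hc : HasValInt ϖ c v)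
    (hd : HasValInt ϖ d w) : HasValInt ϖ (c * d) (v + w) := by
  obtain ⟨u, rfl⟩ := hc
  obtain ⟨u', rfl⟩ := hd
  exact ⟨u * u', by rw [Units.val_mul, map_mul, zpow_add₀ hπ]; ring⟩

theorem hasValInt_prod (hπ : algebraMap O F ϖ ≠ 0) {ι : Type*} (s : Finset ι) {f : ι → F}
    {a : ι → ℤ} (h : ∀ i ∈ s, HasValInt ϖ (f i) (a i)) :
    HasValInt ϖ (∏ i ∈ s, f i) (∑ i ∈ s, a i) := by
  classical
  induction s using Finset.induction_on with
  | empty => exact ⟨1, by simp⟩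
  | insert i s hi ih =>
    rw [Finset.prod_insert hi, Finset.sum_insert hi]
    exact (h i (s.mem_insert_self i)).mul hπ (ih fun j hj => h j (s.mem_insert_of_mem hj))

theorem hasValInt_prod_erase (hπ : algebraMap O F ϖ ≠ 0) {ι : Type*} [Fintype ι]
    [DecidableEq ι] {f : ι → F} {a : ι → ℤ} (h : ∀ i, HasValInt ϖ (f i) (a i)) (i : ι) :
    HasValInt ϖ (∏ l ∈ Finset.univ.erase i, f l) (∑ l, a l - a i) := by
  rw [← Finset.sum_erase_add _ _ (Finset.mem_univ i), add_sub_cancel_right]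
  exact hasValInt_prod hπ _ fun l _ => h l

theorem LeVal.of_hasValInt_mul (hπ : algebraMap O F ϖ ≠ 0) (hc : HasValInt ϖ c v)
    (h : LeVal ϖ (v + w) (c * d)) : LeVal ϖ w d := by
  have hc0 := hc.ne_zero hπ
  obtain ⟨u, hu⟩ := hc
  obtain ⟨b, hb⟩ := h
  refine ⟨b * ↑u⁻¹, mul_left_cancel₀ hc0 ?_⟩
  have hu1 : algebraMap O F ↑u * algebraMap O F ↑u⁻¹ = 1 := by
    rw [← map_mul, Units.mul_inv, map_one]
  rw [hb, hu, map_mul, zpow_add₀ hπ]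
  linear_combination (-(algebraMap O F ϖ ^ v * algebraMap O F ϖ ^ w * algebraMap O F b)) * hu1

theorem LeVal.le_of_hasValInt (hπ : algebraMap O F ϖ ≠ 0)
    (inj : Function.Injective (algebraMap O F)) (hϖ : ¬IsUnit ϖ)
    (h : LeVal ϖ v c) (hc : HasValInt ϖ c w) : v ≤ w := by
  by_contra! hlt
  obtain ⟨k, hk⟩ := Int.exists_add_of_le (Int.add_one_le_of_lt hlt)
  obtain ⟨b, rfl⟩ := h
  obtain ⟨u, hu⟩ := hc
  have hub : ϖ * (ϖ ^ k * b) = u := by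
    refine inj (mul_left_cancel₀ (zpow_ne_zero w hπ) ?_)
    rw [← hu, hk, zpow_add₀ hπ, zpow_add₀ hπ, zpow_one, zpow_natCast]
    simp only [map_mul, map_pow]
    ring
  exact hϖ (isUnit_of_dvd_unit ⟨_, hub.symm⟩ u.isUnit)

end Valuation

open scoped Matrix

def gram {X ι : Type*} (B : X → X → F) (f : ι → X) : Matrix ι ι F :=
  Matrix.of fun i j => B (f i) (f j)

theorem gram_eq_diagonal {X ι : Type*} [DecidableEq ι] {B : X → X → F} {f : ι → X}
    (horth : ∀ i j, i ≠ j → B (f i) (f j) = 0) :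
    gram B f = Matrix.diagonal fun i => B (f i) (f i) := by
  ext i j
  by_cases hij : i = j
  · subst hij
    simp [gram]
  · simp [gram, hij, horth i j hij]

section Hermitian

variable {σ : F ≃+* F} {B : V → V → F}

def IsHermitianForm.linearLeft (hB : IsHermitianForm σ B) (z : V) : V →ₗ[F] F where
  toFun y := B y z
  map_add' x y := hB.add_left x y z
  map_smul' c y := hB.smul_left c y z

theorem IsHermitianForm.sum_left (hB : IsHermitianForm σ B) {ι : Type*} (s : Finset ι)
    (g : ι → V) (z : V) : B (∑ i ∈ s, g i) z = ∑ i ∈ s, B (g i) z :=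
  map_sum (hB.linearLeft z) g s

theorem IsHermitianForm.sub_left_s16 (hB : IsHermitianForm σ B) (x y z : V) :
    B (x - y) z = B x z - B y z :=
  map_sub (hB.linearLeft z) x y

theorem IsHermitianForm.eq_zero_comm (hB : IsHermitianForm σ B) {y z : V} :
    B y z = 0 ↔ B z y = 0 := by
  rw [hB.conj_symm y z, map_eq_zero]

theorem IsHermitianForm.smul_right_s16 (hB : IsHermitianForm σ B) (c : F) (y z : V) :
    B y (c • z) = σ c * B y z := by
  rw [hB.conj_symm y, hB.smul_left, map_mul, ← hB.conj_symm]

theorem IsHermitianForm.sum_right (hB : IsHermitianForm σ B) {ι : Type*} (s : Finset ι)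
    (y : V) (g : ι → V) : B y (∑ i ∈ s, g i) = ∑ i ∈ s, B y (g i) := by
  rw [hB.conj_symm, hB.sum_left, map_sum]
  simp only [← hB.conj_symm]

theorem IsHermitianForm.apply_eq_zero_of_mem_span (hB : IsHermitianForm σ B) {s : Set V}
    {y : V} (h : ∀ z ∈ s, B z y = 0) {z : V} (hz : z ∈ Submodule.span O s) : B z y = 0 :=
  (Submodule.span_le (p := (LinearMap.ker (hB.linearLeft y)).restrictScalars O)).2 h hz

theorem gram_eq_mul_gram_mul (hB : IsHermitianForm σ B) {ι : Type*} [Fintype ι]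
    {f g : ι → V} (M : Matrix ι ι F) (h : ∀ i, f i = ∑ k, M i k • g k) :
    gram B f = M * gram B g * (M.map σ)ᵀ := by
  ext i j
  simp only [gram, Matrix.mul_apply, Matrix.of_apply, Matrix.transpose_apply, Matrix.map_apply,
    h i, h j, hB.sum_left, hB.sum_right, hB.smul_left, hB.smul_right_s16, Finset.sum_mul]
  rw [Finset.sum_comm]
  exact Finset.sum_congr rfl fun _ _ => Finset.sum_congr rfl fun _ _ => by ring

end Hermitian

section Adjugate

variable {ι : Type*} [Fintype ι]

theorem leVal_mul_mul_apply {ϖ : O} {m : ℤ} {A X C : Matrix ι ι F}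
    (hA : ∀ i j, A i j ∈ (algebraMap O F).range) (hX : ∀ i j, LeVal ϖ m (X i j))
    (hC : ∀ i j, C i j ∈ (algebraMap O F).range) (i j : ι) :
    LeVal ϖ m ((A * X * C) i j) :=
  leVal_sum _ fun k _ => (leVal_sum _ fun l _ => (hX l k).mem_mul (hA i l)).mul_mem (hC k j)

variable [DecidableEq ι]

/-- The entries of the adjugate are the `(n-1)`-minors, so for a Gram matrix `G` of a lattice
this says `a_1 + ⋯ + a_{n-1} ≥ m` for its fundamental invariants. -/
def AdjugateLeVal (ϖ : O) (m : ℤ) (G : Matrix ι ι F) : Prop :=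
  ∀ i j, LeVal ϖ m (G.adjugate i j)

theorem adjugate_apply_mem_range {M : Matrix ι ι F}
    (hM : ∀ i j, M i j ∈ (algebraMap O F).range) (i j : ι) :
    M.adjugate i j ∈ (algebraMap O F).range := by
  choose P hP using hM
  have hMP : M = (algebraMap O F).mapMatrix (Matrix.of P) := by
    ext i j
    exact (hP i j).symm
  rw [hMP, ← RingHom.map_adjugate]
  exact ⟨_, rfl⟩

variable {σ : F ≃+* F} {B : V → V → F}

theorem apply_mem_range_of_mem_range
    (hσO : ∀ c : O, σ (algebraMap O F c) ∈ (algebraMap O F).range) {c : F}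
    (hc : c ∈ (algebraMap O F).range) : σ c ∈ (algebraMap O F).range := by
  obtain ⟨b, rfl⟩ := hc
  exact hσO b

theorem AdjugateLeVal.of_forall_mem_span (hB : IsHermitianForm σ B)
    (hσO : ∀ c : O, σ (algebraMap O F c) ∈ (algebraMap O F).range) {ϖ : O} {m : ℤ}
    {g₁ g₂ : ι → V} (hsub : ∀ i, g₁ i ∈ Submodule.span O (Set.range g₂))
    (h : AdjugateLeVal ϖ m (gram B g₂)) : AdjugateLeVal ϖ m (gram B g₁) := by
  choose P hP using fun i => (Submodule.mem_span_range_iff_exists_fun O).1 (hsub i)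
  set M : Matrix ι ι F := (Matrix.of P).map (algebraMap O F)
  have hM : ∀ i, g₁ i = ∑ k, M i k • g₂ k := fun i => by
    simp only [M, ← hP i, Matrix.map_apply, Matrix.of_apply, algebraMap_smul]
  have hMO : ∀ i j, M i j ∈ (algebraMap O F).range := fun i j => ⟨P i j, rfl⟩
  have hMσO : ∀ i j, (M.map σ)ᵀ i j ∈ (algebraMap O F).range := fun i j => hσO (P j i)
  intro i j
  rw [gram_eq_mul_gram_mul hB M hM, Matrix.adjugate_mul_distrib, Matrix.adjugate_mul_distrib,
    ← Matrix.mul_assoc]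
  exact leVal_mul_mul_apply (adjugate_apply_mem_range hMσO) h (adjugate_apply_mem_range hMO) i j

theorem AdjugateLeVal.iff_of_span_eq (hB : IsHermitianForm σ B)
    (hσO : ∀ c : O, σ (algebraMap O F c) ∈ (algebraMap O F).range) {ϖ : O} {m : ℤ}
    {g₁ g₂ : ι → V} (h : Submodule.span O (Set.range g₁) = Submodule.span O (Set.range g₂)) :
    AdjugateLeVal ϖ m (gram B g₁) ↔ AdjugateLeVal ϖ m (gram B g₂) :=
  ⟨.of_forall_mem_span hB hσO fun i => h ▸ Submodule.subset_span ⟨i, rfl⟩,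
    .of_forall_mem_span hB hσO fun i => h ▸ Submodule.subset_span ⟨i, rfl⟩⟩

end Adjugate

theorem adjugateLeVal_diagonal_iff {ϖ : O} (hπ : algebraMap O F ϖ ≠ 0)
    (inj : Function.Injective (algebraMap O F)) (hϖ : ¬IsUnit ϖ) {n : ℕ}
    {d : Fin (n + 1) → F} {a : Fin (n + 1) → ℤ} (ha : Monotone a)
    (hd : ∀ i, HasValInt ϖ (d i) (a i)) (m : ℤ) :
    AdjugateLeVal ϖ m (Matrix.diagonal d) ↔ m ≤ ∑ i : Fin n, a i.castSucc := by
  have hlast : ∑ i : Fin n, a i.castSucc = ∑ l, a l - a (Fin.last n) := by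
    rw [Fin.sum_univ_castSucc, add_sub_cancel_right]
  simp only [AdjugateLeVal, Matrix.adjugate_diagonal, Matrix.diagonal_apply]
  constructor
  · intro h
    have hlast_entry := h (Fin.last n) (Fin.last n)
    rw [if_pos rfl] at hlast_entry
    exact hlast ▸ hlast_entry.le_of_hasValInt hπ inj hϖ (hasValInt_prod_erase hπ hd _)
  · intro h i j
    split_ifs
    · refine (hasValInt_prod_erase hπ hd i).leVal.mono hπ ?_
      have := ha (Fin.le_last i)
      omega
    · exact leVal_zero ϖ m

section Projection

variable {σ : F ≃+* F} {B : V → V → F} {ι : Type*} [Fintype ι]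

def orthCoeff (B : V → V → F) (e : ι → V) (x : V) (j : ι) : F :=
  B x (e j) / B (e j) (e j)

def orthResidual (B : V → V → F) (e : ι → V) (x : V) : V :=
  x - ∑ j, orthCoeff B e x j • e j

variable {e : ι → V}

theorem IsHermitianForm.sum_smul_apply_of_orth (hB : IsHermitianForm σ B)
    (horth : ∀ i j, i ≠ j → B (e i) (e j) = 0) (c : ι → F) (j : ι) :
    B (∑ i, c i • e i) (e j) = c j * B (e j) (e j) := by
  rw [hB.sum_left, Finset.sum_eq_single j (fun i _ hij => by rw [hB.smul_left, horth i j hij,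
    mul_zero]) (by simp), hB.smul_left]

theorem IsHermitianForm.orthResidual_apply (hB : IsHermitianForm σ B)
    (horth : ∀ i j, i ≠ j → B (e i) (e j) = 0) (hd : ∀ j, B (e j) (e j) ≠ 0) (x : V) (j : ι) :
    B (orthResidual B e x) (e j) = 0 := by
  rw [orthResidual, hB.sub_left_s16, hB.sum_smul_apply_of_orth horth, orthCoeff,
    div_mul_cancel₀ _ (hd j), sub_self]

theorem IsHermitianForm.apply_orthResidual (hB : IsHermitianForm σ B)
    (horth : ∀ i j, i ≠ j → B (e i) (e j) = 0) (hd : ∀ j, B (e j) (e j) ≠ 0) (x : V) :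
    B x (orthResidual B e x) = B (orthResidual B e x) (orthResidual B e x) := by
  have hx : x - orthResidual B e x = ∑ j, orthCoeff B e x j • e j := sub_sub_cancel _ _
  rw [← sub_eq_zero, ← hB.sub_left_s16, hx, hB.sum_left]
  refine Finset.sum_eq_zero fun j _ => ?_
  rw [hB.smul_left, hB.eq_zero_comm.1 (hB.orthResidual_apply horth hd x j), mul_zero]

theorem IsHermitianForm.orthResidual_eq_zero (hB : IsHermitianForm σ B)
    (hBnd : ∀ x : V, (∀ y : V, B x y = 0) → x = 0)
    (horth : ∀ i j, i ≠ j → B (e i) (e j) = 0) (hd : ∀ j, B (e j) (e j) ≠ 0) {x : V}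
    {κ : Type*} {g : κ → V} (hg : Submodule.span F (Set.range g) = ⊤)
    (hgx : ∀ k, g k ∈ Submodule.span O (insert x (Set.range e)))
    (h : B (orthResidual B e x) (orthResidual B e x) = 0) : orthResidual B e x = 0 := by
  have hx : ∀ z ∈ insert x (Set.range e), B z (orthResidual B e x) = 0 := by
    rintro _ (rfl | ⟨j, rfl⟩)
    · exact (hB.apply_orthResidual horth hd _).trans h
    · exact hB.eq_zero_comm.1 (hB.orthResidual_apply horth hd x j)
  have hg0 : ∀ z ∈ Set.range g, B z (orthResidual B e x) = 0 := by
    rintro _ ⟨k, rfl⟩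
    exact hB.apply_eq_zero_of_mem_span hx (hgx k)
  refine hBnd _ fun z => hB.eq_zero_comm.2 (hB.apply_eq_zero_of_mem_span (O := F) hg0 ?_)
  exact hg ▸ Submodule.mem_top

/-- The orthogonal decomposition `x = l + y`, if it exists, has `l` the orthogonal projection
of `x` onto `span e`. -/
theorem IsHermitianForm.exists_add_orth_iff (hB : IsHermitianForm σ B)
    (horth : ∀ i j, i ≠ j → B (e i) (e j) = 0) (hd : ∀ j, B (e j) (e j) ≠ 0) (x : V)
    (P : V → Prop) :
    (∃ l ∈ Submodule.span O (Set.range e), ∃ y : V,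
        (∀ z ∈ Submodule.span O (Set.range e), B y z = 0) ∧ P y ∧ x = l + y) ↔
      (∀ j, orthCoeff B e x j ∈ (algebraMap O F).range) ∧ P (orthResidual B e x) := by
  constructor
  · rintro ⟨l, hl, y, hy, hPy, rfl⟩
    obtain ⟨b, rfl⟩ := (Submodule.mem_span_range_iff_exists_fun O).1 hl
    have hsum : ∑ i, b i • e i = ∑ i, algebraMap O F (b i) • e i := by
      simp only [algebraMap_smul]
    have hcoeff (j) : orthCoeff B e (∑ i, b i • e i + y) j = algebraMap O F (b j) := by
      rw [orthCoeff, hB.add_left, hy _ (Submodule.subset_span ⟨j, rfl⟩), add_zero, hsum,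
        hB.sum_smul_apply_of_orth horth, mul_div_cancel_right₀ _ (hd j)]
    refine ⟨fun j => ⟨b j, (hcoeff j).symm⟩, ?_⟩
    simpa only [orthResidual, hcoeff, ← hsum, add_sub_cancel_left] using hPy
  · rintro ⟨hcoeff, hP⟩
    choose b hb using hcoeff
    refine ⟨∑ j, orthCoeff B e x j • e j, ?_, orthResidual B e x, fun z hz => ?_, hP, ?_⟩
    · simp only [← hb, algebraMap_smul]
      exact Submodule.sum_mem _ fun j _ => Submodule.smul_mem _ _ (Submodule.subset_span ⟨j, rfl⟩)
    · refine hB.eq_zero_comm.2 (hB.apply_eq_zero_of_mem_span ?_ hz)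
      rintro _ ⟨j, rfl⟩
      exact hB.eq_zero_comm.1 (hB.orthResidual_apply horth hd x j)
    · rw [orthResidual, add_sub_cancel]

end Projection

theorem Fin.univ_erase_last (n : ℕ) :
    Finset.univ.erase (Fin.last n) = Finset.univ.map Fin.castSuccEmb := by
  ext i
  induction i using Fin.lastCases <;> simp [Fin.castSucc_ne_last]

theorem Fin.univ_erase_castSucc {n : ℕ} (i : Fin n) :
    Finset.univ.erase i.castSucc
      = insert (Fin.last n) ((Finset.univ.erase i).map Fin.castSuccEmb) := by
  ext j
  induction j using Fin.lastCases <;> simp [Fin.castSucc_ne_last, eq_comm]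

theorem Fin.prod_univ_erase_last_snoc {M : Type*} [CommMonoid M] {n : ℕ} (f : Fin n → M)
    (x : M) : ∏ l ∈ Finset.univ.erase (Fin.last n), (Fin.snoc f x : Fin (n + 1) → M) l
      = ∏ i, f i := by
  simp [Fin.univ_erase_last]

theorem Fin.prod_univ_erase_castSucc_snoc {M : Type*} [CommMonoid M] {n : ℕ} (f : Fin n → M)
    (x : M) (i : Fin n) :
    ∏ l ∈ Finset.univ.erase i.castSucc, (Fin.snoc f x : Fin (n + 1) → M) l
      = x * ∏ l ∈ Finset.univ.erase i, f l := by
  rw [Fin.univ_erase_castSucc, Finset.prod_insert (by simp [Fin.castSucc_ne_last]),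
    Finset.prod_map]
  simp

section LastRowAdd

open Matrix

theorem Matrix.adjugate_one_add_vecMulVec {R ι : Type*} [CommRing R] [Fintype ι]
    [DecidableEq ι] (u v : ι → R) (h : v ⬝ᵥ u = 0) :
    (1 + vecMulVec u v).adjugate = 1 - vecMulVec u v := by
  have hdet : (1 + vecMulVec u v).det = 1 := by
    rw [vecMulVec_eq Unit, det_one_add_replicateCol_mul_replicateRow, h, add_zero]
  have hinv : (1 + vecMulVec u v) * (1 - vecMulVec u v) = 1 := by
    rw [add_mul, one_mul, mul_sub, mul_one, vecMulVec_mul_vecMulVec, h, zero_smul,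
      vecMulVec_zero]
    abel
  calc (1 + vecMulVec u v).adjugate
      = (1 + vecMulVec u v).adjugate * ((1 + vecMulVec u v) * (1 - vecMulVec u v)) := by
        rw [hinv, Matrix.mul_one]
    _ = 1 - vecMulVec u v := by
        rw [← Matrix.mul_assoc, adjugate_mul, hdet, one_smul, Matrix.one_mul]

variable {R : Type*} [CommRing R] {n : ℕ}

/-- The elementary row operation adding `∑ j, c j • (row j)` to the last row. -/
def lastRowAdd (c : Fin n → R) : Matrix (Fin (n + 1)) (Fin (n + 1)) R :=
  1 + vecMulVec (Pi.single (Fin.last n) 1) (Fin.snoc c 0)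

@[simp]
theorem lastRowAdd_castSucc (c : Fin n → R) (i : Fin n) (k : Fin (n + 1)) :
    lastRowAdd c i.castSucc k = (1 : Matrix (Fin (n + 1)) (Fin (n + 1)) R) i.castSucc k := by
  simp [lastRowAdd, vecMulVec_apply, Fin.castSucc_ne_last]

@[simp]
theorem lastRowAdd_last_castSucc (c : Fin n → R) (j : Fin n) :
    lastRowAdd c (Fin.last n) j.castSucc = c j := by
  simp [lastRowAdd, vecMulVec_apply, one_apply, (Fin.castSucc_lt_last j).ne']

@[simp]
theorem lastRowAdd_last_last (c : Fin n → R) : lastRowAdd c (Fin.last n) (Fin.last n) = 1 := by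
  simp [lastRowAdd, vecMulVec_apply]

theorem adjugate_lastRowAdd (c : Fin n → R) : (lastRowAdd c).adjugate = lastRowAdd (-c) := by
  rw [lastRowAdd, adjugate_one_add_vecMulVec _ _ (by simp [dotProduct_single]), lastRowAdd,
    sub_eq_add_neg, ← vecMulVec_neg]
  congr 2
  ext k
  induction k using Fin.lastCases <;> simp

theorem lastRowAdd_apply_mem_range {K : Type*} [Field K] [Algebra R K] {c : Fin n → K}
    (hc : ∀ j, c j ∈ (algebraMap R K).range) (i k : Fin (n + 1)) :
    lastRowAdd c i k ∈ (algebraMap R K).range := by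
  induction i using Fin.lastCases with
  | last =>
    induction k using Fin.lastCases with
    | last => simp
    | cast j => simpa using hc j
  | cast i =>
    simp only [lastRowAdd_castSucc, one_apply]
    split_ifs <;> simp

theorem lastRowAdd_conj_diagonal_apply_last_castSucc (σ : R ≃+* R) (c : Fin n → R)
    (D : Fin (n + 1) → R) (j : Fin n) :
    (((lastRowAdd c).map σ)ᵀ * diagonal D * lastRowAdd c) (Fin.last n) j.castSucc
      = D (Fin.last n) * c j := by
  simp [Matrix.mul_apply, Fin.sum_univ_castSucc, one_apply, diagonal_apply]

theorem lastRowAdd_conj_diagonal_apply_castSucc_castSucc (σ : R ≃+* R) (c : Fin n → R)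
    (D : Fin (n + 1) → R) (i : Fin n) :
    (((lastRowAdd c).map σ)ᵀ * diagonal D * lastRowAdd c) i.castSucc i.castSucc
      = D i.castSucc + σ (c i) * D (Fin.last n) * c i := by
  simp [Matrix.mul_apply, Fin.sum_univ_castSucc, one_apply, diagonal_apply]

theorem Fin.snoc_eq_sum_lastRowAdd_smul {K : Type*} [Field K] [Module K V] (e : Fin n → V)
    (c : Fin n → K) (x : V) (i : Fin (n + 1)) :
    (Fin.snoc e x : Fin (n + 1) → V) i
      = ∑ k, lastRowAdd c i k • (Fin.snoc e (x - ∑ j, c j • e j) : Fin (n + 1) → V) k := by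
  simp only [lastRowAdd, Matrix.add_apply, add_smul, Finset.sum_add_distrib, Matrix.one_apply,
    ite_smul, one_smul, zero_smul, Finset.sum_ite_eq, Finset.mem_univ, if_true, vecMulVec_apply,
    mul_smul, ← Finset.smul_sum]
  induction i using Fin.lastCases with
  | last => simp [Fin.sum_univ_castSucc]
  | cast i => simp [Fin.castSucc_ne_last]

end LastRowAdd

section Snoc

variable {σ : F ≃+* F} {B : V → V → F} {n : ℕ} {e : Fin n → V}

theorem IsHermitianForm.snoc_orthResidual_orth (hB : IsHermitianForm σ B)
    (horth : ∀ i j, i ≠ j → B (e i) (e j) = 0) (hd : ∀ j, B (e j) (e j) ≠ 0) (x : V)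
    (i j : Fin (n + 1)) (hij : i ≠ j) :
    B ((Fin.snoc e (orthResidual B e x) : Fin (n + 1) → V) i)
      ((Fin.snoc e (orthResidual B e x) : Fin (n + 1) → V) j) = 0 := by
  induction i using Fin.lastCases <;> induction j using Fin.lastCases
  · exact absurd rfl hij
  · simpa using hB.orthResidual_apply horth hd x _
  · simpa using hB.eq_zero_comm.1 (hB.orthResidual_apply horth hd x _)
  · simpa using horth _ _ fun h => hij (by rw [h])

/-- `snoc e x = lastRowAdd c • snoc e y` for `y = orthResidual B e x`, and `snoc e y` is
orthogonal, so `gram B (snoc e x) = T * diagonal _ * Tᴴ` with `T = lastRowAdd c`. -/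
theorem IsHermitianForm.adjugate_gram_snoc (hB : IsHermitianForm σ B)
    (horth : ∀ i j, i ≠ j → B (e i) (e j) = 0) (hd : ∀ j, B (e j) (e j) ≠ 0) (x : V) :
    (gram B (Fin.snoc e x : Fin (n + 1) → V)).adjugate
      = ((lastRowAdd (-orthCoeff B e x)).map σ)ᵀ
        * Matrix.diagonal (fun k => ∏ l ∈ Finset.univ.erase k,
            (Fin.snoc (fun i => B (e i) (e i))
              (B (orthResidual B e x) (orthResidual B e x)) : Fin (n + 1) → F) l)
        * lastRowAdd (-orthCoeff B e x) := by
  have hdiag : gram B (Fin.snoc e (orthResidual B e x) : Fin (n + 1) → V)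
      = Matrix.diagonal (Fin.snoc (fun i => B (e i) (e i))
          (B (orthResidual B e x) (orthResidual B e x))) := by
    rw [gram_eq_diagonal (hB.snoc_orthResidual_orth horth hd x)]
    congr 1
    ext k
    induction k using Fin.lastCases <;> simp
  have hσadj : ((lastRowAdd (orthCoeff B e x)).map σ).adjugate
      = ((lastRowAdd (orthCoeff B e x)).adjugate).map σ :=
    ((σ : F →+* F).map_adjugate _).symm
  rw [gram_eq_mul_gram_mul hB _ (Fin.snoc_eq_sum_lastRowAdd_smul e (orthCoeff B e x) x),
    ← orthResidual, hdiag, Matrix.adjugate_mul_distrib, Matrix.adjugate_mul_distrib,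
    Matrix.adjugate_diagonal, ← Matrix.adjugate_transpose, ← Matrix.mul_assoc, hσadj,
    adjugate_lastRowAdd]

end Snoc

omit [Module O V] [IsScalarTower O F V] in
theorem IsHermitianForm.adjugateLeVal_gram_snoc_iff {σ : F ≃+* F} {B : V → V → F}
    (hB : IsHermitianForm σ B) (hσO : ∀ c : O, σ (algebraMap O F c) ∈ (algebraMap O F).range)
    {ϖ : O} (hπ : algebraMap O F ϖ ≠ 0) {n : ℕ} {e : Fin (n + 1) → V} {a : Fin (n + 1) → ℤ}
    (ha : Monotone a) (horth : ∀ i j, i ≠ j → B (e i) (e j) = 0)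
    (hval : ∀ i, HasValInt ϖ (B (e i) (e i)) (a i)) (x : V) :
    AdjugateLeVal ϖ (∑ i, a i) (gram B (Fin.snoc e x : Fin (n + 2) → V)) ↔
      (∀ j, orthCoeff B e x j ∈ (algebraMap O F).range) ∧
        LeVal ϖ (a (Fin.last n)) (B (orthResidual B e x) (orthResidual B e x)) := by
  have hd : ∀ i, B (e i) (e i) ≠ 0 := fun i => (hval i).ne_zero hπ
  simp only [AdjugateLeVal, hB.adjugate_gram_snoc horth hd x]
  set c := orthCoeff B e x
  set β := B (orthResidual B e x) (orthResidual B e x)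
  set D : Fin (n + 2) → F := fun k =>
    ∏ l ∈ Finset.univ.erase k, (Fin.snoc (fun i => B (e i) (e i)) β : Fin (n + 2) → F) l
  have hDlast : HasValInt ϖ (D (Fin.last _)) (∑ i, a i) := by
    simpa [D, Fin.prod_univ_erase_last_snoc] using hasValInt_prod hπ _ fun i _ => hval i
  have hDcast (i : Fin (n + 1)) : D i.castSucc = β * ∏ l ∈ Finset.univ.erase i, B (e l) (e l) :=
    Fin.prod_univ_erase_castSucc_snoc _ β i
  constructor
  · intro h
    have hc (j : Fin (n + 1)) : c j ∈ (algebraMap O F).range := by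
      have hj := h (Fin.last _) j.castSucc
      rw [lastRowAdd_conj_diagonal_apply_last_castSucc, Pi.neg_apply, mul_neg,
        leVal_neg_iff, ← add_zero (∑ i, a i)] at hj
      exact leVal_zero_iff.1 (hj.of_hasValInt_mul hπ hDlast)
    refine ⟨hc, ?_⟩
    have hlast := h (Fin.last n).castSucc (Fin.last n).castSucc
    rw [lastRowAdd_conj_diagonal_apply_castSucc_castSucc] at hlast
    have hc' : (-c) (Fin.last n) ∈ (algebraMap O F).range := neg_mem (hc (Fin.last n))
    have hD := hlast.add
      ((hDlast.leVal.mem_mul (apply_mem_range_of_mem_range hσO hc')).mul_mem hc').neg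
    rw [add_neg_cancel_right, hDcast, mul_comm, ← sub_add_cancel (∑ i, a i) (a (Fin.last n))]
      at hD
    exact hD.of_hasValInt_mul hπ (hasValInt_prod_erase hπ hval _)
  · rintro ⟨hc, hβ⟩
    have hS := lastRowAdd_apply_mem_range (c := -c) fun j => neg_mem (hc j)
    refine leVal_mul_mul_apply (fun i j => apply_mem_range_of_mem_range hσO (hS j i))
      (fun k l => ?_) hS
    rw [Matrix.diagonal_apply]
    split_ifs
    · induction k using Fin.lastCases with
      | last => exact hDlast.leVal
      | cast i =>
        rw [hDcast, ← add_sub_cancel (a i) (∑ i, a i)]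
        exact (hβ.mono hπ (ha (Fin.le_last i))).mul hπ (hasValInt_prod_erase hπ hval i).leVal
    · exact leVal_zero ϖ _

end

theorem exists_hasValInt {ϖ : O} (hϖ : Irreducible ϖ) {c : F} (hc : c ≠ 0) :
    ∃ v : ℤ, HasValInt ϖ c v := by
  have hπ : algebraMap O F ϖ ≠ 0 :=
    (map_ne_zero_iff _ (IsFractionRing.injective O F)).2 hϖ.ne_zero
  obtain ⟨p, q, hq, rfl⟩ := IsFractionRing.div_surjective (A := O) c
  have hp : p ≠ 0 := by
    rintro rfl
    simp at hc
  obtain ⟨k, u, rfl⟩ := IsDiscreteValuationRing.eq_unit_mul_pow_irreducible hp hϖ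
  obtain ⟨l, u', rfl⟩ :=
    IsDiscreteValuationRing.eq_unit_mul_pow_irreducible (nonZeroDivisors.ne_zero hq) hϖ
  refine ⟨k - l, u * u'⁻¹, ?_⟩
  rw [zpow_sub₀ hπ, zpow_natCast, zpow_natCast]
  simp only [map_mul, map_pow, Units.val_mul]
  field_simp
  rw [← map_mul, Units.mul_inv, map_one]

theorem leVal_iff_eq_zero_or_hasValInt {ϖ : O} (hϖ : Irreducible ϖ) {v : ℤ} {c : F} :
    LeVal ϖ v c ↔ c = 0 ∨ ∃ w, v ≤ w ∧ HasValInt ϖ c w := by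
  have inj := IsFractionRing.injective O F
  have hπ : algebraMap O F ϖ ≠ 0 := (map_ne_zero_iff _ inj).2 hϖ.ne_zero
  constructor
  · intro h
    by_cases hc : c = 0
    · exact .inl hc
    · obtain ⟨w, hw⟩ := exists_hasValInt hϖ hc
      exact .inr ⟨w, h.le_of_hasValInt hπ inj hϖ.not_isUnit hw, hw⟩
  · rintro (rfl | ⟨w, hvw, hw⟩)
    · exact leVal_zero ϖ v
    · exact hw.leVal.mono hπ hvw


theorem invariants_sum_ineq_iff_mem_general
    (σ : F ≃+* F)
    (hσO : ∀ c : O, σ (algebraMap O F c) ∈ (algebraMap O F).range)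
    (B : V → V → F) (hB : IsHermitianForm σ B)
    (hBnd : ∀ x : V, (∀ y : V, B x y = 0) → x = 0)
    (ϖ : O) (hϖ : Irreducible ϖ)
    (r : ℕ) (hdim : Module.finrank F V = r + 2)
    (Lb : Submodule O V)
    (e : Fin (r + 1) → V) (a : Fin (r + 1) → ℕ)
    (hspan : Submodule.span O (Set.range e) = Lb)
    (ha : Monotone a)
    (horth : ∀ i j, i ≠ j → B (e i) (e j) = 0)
    (hvale : ∀ i, HasValNat ϖ (B (e i) (e i)) (a i))
    (x : V)
    (e' : Fin (r + 2) → V) (a' : Fin (r + 2) → ℤ)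
    (hspan' : Submodule.span O (Set.range e') = Lb ⊔ Submodule.span O {x})
    (hli' : LinearIndependent F e')
    (ha' : Monotone a')
    (horth' : ∀ i j, i ≠ j → B (e' i) (e' j) = 0)
    (hvale' : ∀ i, HasValInt ϖ (B (e' i) (e' i)) (a' i)) :
    ((∑ i : Fin (r + 1), (a i : ℤ)) ≤ ∑ i : Fin (r + 1), a' (Fin.castSucc i)) ↔
      ∃ l ∈ Lb, ∃ y : V, (∀ z ∈ Lb, B y z = 0) ∧
        (y = 0 ∨ ∃ w : ℤ, (a (Fin.last r) : ℤ) ≤ w ∧ HasValInt ϖ (B y y) w) ∧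
        x = l + y := by
  have inj := IsFractionRing.injective O F
  have hπ : algebraMap O F ϖ ≠ 0 := (map_ne_zero_iff _ inj).2 hϖ.ne_zero
  have hval : ∀ i, HasValInt ϖ (B (e i) (e i)) (a i) := fun i => (hvale i).hasValInt
  have hd : ∀ i, B (e i) (e i) ≠ 0 := fun i => (hval i).ne_zero hπ
  subst hspan
  have hL : Submodule.span O (Set.range e') = Submodule.span O (insert x (Set.range e)) := by
    rw [hspan', Submodule.span_insert, sup_comm]
  have hanis : B (orthResidual B e x) (orthResidual B e x) = 0 ↔ orthResidual B e x = 0 :=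
    ⟨hB.orthResidual_eq_zero hBnd horth hd
      (hli'.span_eq_top_of_card_eq_finrank (by rw [Fintype.card_fin, hdim]))
      fun k => hL ▸ Submodule.subset_span (Set.mem_range_self k),
    fun h => by rw [h, hB.zero_left]⟩
  rw [← adjugateLeVal_diagonal_iff hπ inj hϖ.not_isUnit ha' hvale', ← gram_eq_diagonal horth',
    AdjugateLeVal.iff_of_span_eq hB hσO (hL.trans (by rw [Fin.range_snoc])),
    hB.adjugateLeVal_gram_snoc_iff hσO hπ (a := fun i => (a i : ℤ)) (Nat.mono_cast.comp ha) horth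
      hval x,
    hB.exists_add_orth_iff horth hd x
      fun y => y = 0 ∨ ∃ w : ℤ, (a (Fin.last r) : ℤ) ≤ w ∧ HasValInt ϖ (B y y) w,
    leVal_iff_eq_zero_or_hasValInt hϖ, hanis]

/-- for an integral lattice `L^♭` of rank `n−1` with fundamental invariants
`(a_1,…,a_{n−1})` and `x ∈ V ∖ L^♭_F`, letting `(a'_1,…,a'_n)` be the fundamental
invariants of `L^♭ + ⟨x⟩`, one has `a'_1 + ⋯ + a'_{n−1} ≥ a_1 + ⋯ + a_{n−1}` iff
`x ∈ M(L^♭) = L^♭ ⊕ {y ⊥ L^♭ : val(y) ≥ a_{n−1}}`. -/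
theorem invariants_sum_ineq_iff_mem
    (σ : F ≃+* F) (hσ2 : ∀ c : F, σ (σ c) = c)
    (hσO : ∀ c : O, σ (algebraMap O F c) ∈ (algebraMap O F).range)
    (B : V → V → F) (hB : IsHermitianForm σ B)
    (hBnd : ∀ x : V, (∀ y : V, B x y = 0) → x = 0)
    (q : ℕ) (hq1 : 1 < q) (hqodd : Odd q) (ϖ : O) (hϖ : Irreducible ϖ)
    (hres : Nat.card (O ⧸ Ideal.span {ϖ}) = q ^ 2)
    (hσϖ : σ (algebraMap O F ϖ) = algebraMap O F ϖ)
    [FiniteDimensional F V] (r : ℕ) (hdim : Module.finrank F V = r + 2)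
    (Lb : Submodule O V)
    (e : Fin (r + 1) → V) (a : Fin (r + 1) → ℕ)
    (hspan : Submodule.span O (Set.range e) = Lb) (hli : LinearIndependent F e)
    (ha : Monotone a)
    (horth : ∀ i j, i ≠ j → B (e i) (e j) = 0)
    (hvale : ∀ i, HasValNat ϖ (B (e i) (e i)) (a i))
    (x : V) (hx : x ∉ Submodule.span F (Lb : Set V))
    (e' : Fin (r + 2) → V) (a' : Fin (r + 2) → ℤ)
    (hspan' : Submodule.span O (Set.range e') = Lb ⊔ Submodule.span O {x})
    (hli' : LinearIndependent F e')
    (ha' : Monotone a')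
    (horth' : ∀ i j, i ≠ j → B (e' i) (e' j) = 0)
    (hvale' : ∀ i, HasValInt ϖ (B (e' i) (e' i)) (a' i)) :
    ((∑ i : Fin (r + 1), (a i : ℤ)) ≤ ∑ i : Fin (r + 1), a' (Fin.castSucc i)) ↔
      ∃ l ∈ Lb, ∃ y : V, (∀ z ∈ Lb, B y z = 0) ∧
        (y = 0 ∨ ∃ w : ℤ, (a (Fin.last r) : ℤ) ≤ w ∧ HasValInt ϖ (B y y) w) ∧
        x = l + y :=
  invariants_sum_ineq_iff_mem_general σ hσO B hB hBnd ϖ hϖ r hdim Lb e a hspan ha horth hvale x e'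
    a' hspan' hli' ha' horth' hvale'
end
end
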